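/- Let f : 𝓕₁ → ℕ send [t, f] to the number of roots of the forest f (this is well defined on equivalence classes and F-invariant). If x, x′ ∈ 𝓕₁ satisfy f(x) = f(x′), then there exists g ∈ F with g·x = x′; that is, F acts transitively on each level set of f. -/
import Mathlib


/-- Finite rooted binary trees. -/
inductive T : Type
  | leaf : T
  | node : T → T → T
  deriving DecidableEq

/-- A caret is the tree with two leaves. -/
def caret : T := T.node T.leaf T.leaf

/-- The number of leaves of a tree. -/
def T.leaves : T → ℕ
  | .leaf => 1
  | .node l r => l.leaves + r.leaves

/-- The total number of leaves of a forest (list of trees); the leaves are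
ordered left to right. -/
def leavesList (f : List T) : ℕ := (f.map T.leaves).sum

/-- Replace the `k`-th (`0`-indexed, left to right) leaf of a tree with a caret. -/
def T.expandAt : T → ℕ → T
  | .leaf, _ => caret
  | .node l r, k =>
      if k < l.leaves then .node (l.expandAt k) r
      else .node l (r.expandAt (k - l.leaves))

/-- The `k`-th simple expansion of a forest: replace its `k`-th (`0`-indexed,
left to right) leaf with a caret. -/
def expandListAt : List T → ℕ → List T
  | [], _ => []
  | t :: ts, k =>
      if k < t.leaves then t.expandAt k :: ts
      else t :: expandListAt ts (k - t.leaves)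

/-- `Expands f' f` means that `f'` is an expansion of `f`, i.e. `f'` is obtained
from `f` by applying finitely many simple expansions. -/
inductive Expands : List T → List T → Prop
  | refl (f : List T) : Expands f f
  | step {g f : List T} (k : ℕ) (hk : k < leavesList g) (h : Expands g f) :
      Expands (expandListAt g k) f

/-- The trivial forest `1_n` with `n` roots. -/
def trivialForest (n : ℕ) : List T := List.replicate n T.leaf

theorem T.leaves_pos : ∀ t : T, 0 < t.leaves
  | .leaf => Nat.one_pos
  | .node l r => Nat.add_pos_left l.leaves_pos r.leaves

theorem leavesList_trivialForest (n : ℕ) : leavesList (trivialForest n) = n := by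
  simp [leavesList, trivialForest, T.leaves]

theorem trivialForest_ne_nil {n : ℕ} (hn : n ≠ 0) : trivialForest n ≠ [] := by
  simp [trivialForest, hn]

theorem leavesList_singleton (t : T) : leavesList [t] = t.leaves := by
  simp [leavesList]

theorem expandListAt_length (f : List T) (k : ℕ) :
    (expandListAt f k).length = f.length := by
  induction f generalizing k with
  | nil => rfl
  | cons t ts ih => simp only [expandListAt]; split <;> simp [ih]

/-- A forest pair: a pair of nonempty forests with the same number of leaves. -/
def ForestPair : Type :=
  {p : List T × List T // p.1 ≠ [] ∧ p.2 ≠ [] ∧ leavesList p.1 = leavesList p.2}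

/-- One forest pair is obtained from another by a simple expansion:
the `k`-th simple expansion of a pair applies the `k`-th simple expansion
to both coordinates. -/
def PairStep (p q : ForestPair) : Prop :=
  ∃ k : ℕ, k < leavesList p.val.1 ∧
    q.val = (expandListAt p.val.1 k, expandListAt p.val.2 k)

/-- The groupoid `𝓕`: equivalence classes of forest pairs under the equivalence
relation generated by expansion. -/
def Fgpd : Type := Quot PairStep

/-- The class `[f₋, f₊] ∈ 𝓕` of a forest pair. -/
def Fgpd.mk (p : ForestPair) : Fgpd := Quot.mk PairStep p

/-- `MulDef x y z` asserts that the (partial) groupoid product `x ⬝ y` is defined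
and equal to `z`: there are representatives `x = [f₋, f₊]` and `y = [e₋, e₊]`
with `f₊ = e₋`, and then `z = [f₋, e₊]`. -/
def MulDef (x y z : Fgpd) : Prop :=
  ∃ a b : ForestPair, Fgpd.mk a = x ∧ Fgpd.mk b = y ∧ a.val.2 = b.val.1 ∧
    ∃ h : a.val.1 ≠ [] ∧ b.val.2 ≠ [] ∧ leavesList a.val.1 = leavesList b.val.2,
      Fgpd.mk ⟨(a.val.1, b.val.2), h⟩ = z

/-- A split: an element of `𝓕` of the form `[f, 1]`. -/
def IsSplit (s : Fgpd) : Prop :=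
  ∃ (f : List T) (h : f ≠ [] ∧ trivialForest (leavesList f) ≠ [] ∧
      leavesList f = leavesList (trivialForest (leavesList f))),
    s = Fgpd.mk ⟨(f, trivialForest (leavesList f)), h⟩

/-- The relation `≤` on `𝓕` generated by declaring `x ≤ x ⬝ s` for every split `s`
such that the product is defined. -/
def Fgpd.le : Fgpd → Fgpd → Prop :=
  Relation.ReflTransGen (fun x z => ∃ s : Fgpd, IsSplit s ∧ MulDef x s z)

/-- `𝓕₁ ⊆ 𝓕`: the classes `[t, f]` with `t` a tree (a one-root forest) and `f` a
forest with the same number of leaves as `t`. -/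
def InF1 (e : Fgpd) : Prop :=
  ∃ (t : T) (f : List T) (h : ([t] : List T) ≠ [] ∧ f ≠ [] ∧ leavesList [t] = leavesList f),
    e = Fgpd.mk ⟨([t], f), h⟩

/-- Membership in Thompson's group `F ⊆ 𝓕`: the classes `[t₋, t₊]` with `t₋, t₊` trees. -/
def InF (g : Fgpd) : Prop :=
  ∃ (t u : T) (h : ([t] : List T) ≠ [] ∧ ([u] : List T) ≠ [] ∧ leavesList [t] = leavesList [u]),
    g = Fgpd.mk ⟨([t], [u]), h⟩

/-- The map `f : 𝓕 → ℕ` sending `[f₋, f₊]` to the number of roots of `f₊`.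
It is well defined on equivalence classes since simple expansions preserve the
number of roots. -/
def rootsF : Fgpd → ℕ :=
  Quot.lift (fun p : ForestPair => p.val.2.length) (by
    rintro a b ⟨k, hk, hq⟩
    simp [hq, expandListAt_length])

/- ===== auxiliary lemmas ===== -/

theorem leavesList_nil : leavesList [] = 0 := rfl
theorem leavesList_cons (t : T) (ts : List T) :
    leavesList (t :: ts) = t.leaves + leavesList ts := by simp [leavesList]
theorem leavesList_append (a b : List T) :
    leavesList (a ++ b) = leavesList a + leavesList b := by simp [leavesList]

theorem T.leaves_expandAt : ∀ (t : T) (k : ℕ), k < t.leaves →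
    (t.expandAt k).leaves = t.leaves + 1
  | .leaf, _, _ => rfl
  | .node l r, k, hk => by
      simp only [T.expandAt]
      split
      · simp [T.leaves, T.leaves_expandAt l k ‹_›]; omega
      · have hlt : k - l.leaves < r.leaves := by
          simp [T.leaves] at hk; omega
        simp [T.leaves, T.leaves_expandAt r _ hlt]; omega

theorem leavesList_expandListAt : ∀ (f : List T) (k : ℕ), k < leavesList f →
    leavesList (expandListAt f k) = leavesList f + 1
  | [], _, h => by simp [leavesList_nil] at h
  | t :: ts, k, hk => by
      simp only [expandListAt]
      split
      · simp [leavesList_cons, T.leaves_expandAt t k ‹_›]; omega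
      · have hlt : k - t.leaves < leavesList ts := by
          simp [leavesList_cons] at hk; omega
        simp [leavesList_cons, leavesList_expandListAt ts _ hlt]; omega

theorem expandListAt_ne_nil {f : List T} (hf : f ≠ []) (k : ℕ) :
    expandListAt f k ≠ [] := by
  intro h
  apply hf
  have := expandListAt_length f k
  rw [h] at this
  exact List.length_eq_zero_iff.mp this.symm

theorem expandListAt_append (a b : List T) (k : ℕ) :
    expandListAt (a ++ b) k =
      if k < leavesList a then expandListAt a k ++ b
      else a ++ expandListAt b (k - leavesList a) := by
  induction a generalizing k with
  | nil => simp [leavesList_nil]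
  | cons t ts ih =>
      show expandListAt (t :: (ts ++ b)) k = _
      by_cases h1 : k < t.leaves
      · simp only [expandListAt, if_pos h1, leavesList_cons,
          if_pos (show k < t.leaves + leavesList ts by omega), List.cons_append]
      · simp only [expandListAt, if_neg h1, leavesList_cons, List.append_eq, ih]
        by_cases h2 : k - t.leaves < leavesList ts
        · rw [if_pos h2, if_pos (by omega)]
          simp [expandListAt, if_neg h1]
        · rw [if_neg h2, if_neg (by omega), Nat.sub_sub, List.cons_append]

theorem Expands.trans {a b c : List T} (hab : Expands a b) :
    Expands b c → Expands a c := by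
  induction hab with
  | refl => exact id
  | step k hk h ih => exact fun hbc => Expands.step k hk (ih hbc)

theorem Expands_append_left {g₂ f₂ : List T} (f₁ : List T) (h : Expands g₂ f₂) :
    Expands (f₁ ++ g₂) (f₁ ++ f₂) := by
  induction h with
  | refl => exact Expands.refl _
  | step k hk h ih =>
      rename_i g fmid
      have e : f₁ ++ expandListAt g k = expandListAt (f₁ ++ g) (leavesList f₁ + k) := by
        rw [expandListAt_append, if_neg (by omega), Nat.add_sub_cancel_left]
      rw [e]
      exact Expands.step _ (by rw [leavesList_append]; omega) ih

theorem Expands_append {g₁ f₁ g₂ f₂ : List T} (h1 : Expands g₁ f₁)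
    (h2 : Expands g₂ f₂) : Expands (g₁ ++ g₂) (f₁ ++ f₂) := by
  have step1 : Expands (g₁ ++ g₂) (f₁ ++ g₂) := by
    induction h1 with
    | refl => exact Expands.refl _
    | step k hk h ih =>
        rename_i g fmid
        have e : expandListAt g k ++ g₂ = expandListAt (g ++ g₂) k := by
          rw [expandListAt_append, if_pos hk]
        rw [e]
        exact Expands.step _ (by rw [leavesList_append]; omega) ih
  exact step1.trans (Expands_append_left f₁ h2)

/-- Tree-level expansion. -/
inductive TExp : T → T → Prop
  | refl (t : T) : TExp t t
  | step {g f : T} (k : ℕ) (hk : k < g.leaves) (h : TExp g f) :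
      TExp (g.expandAt k) f

theorem TExp.trans {a b c : T} (hab : TExp a b) : TExp b c → TExp a c := by
  induction hab with
  | refl => exact id
  | step k hk h ih => exact fun hbc => TExp.step k hk (ih hbc)

theorem TExp.toExpands {t u : T} (h : TExp t u) : Expands [t] [u] := by
  induction h with
  | refl => exact Expands.refl _
  | step k hk h ih =>
      rename_i g fmid
      have e : [T.expandAt g k] = expandListAt [g] k := by
        simp [expandListAt, if_pos hk]
      rw [e]
      exact Expands.step _ (by simp [leavesList_cons, leavesList_nil]; omega) ih

theorem TExp.nodeLeft {l' l : T} (r : T) (h : TExp l' l) :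
    TExp (T.node l' r) (T.node l r) := by
  induction h with
  | refl => exact TExp.refl _
  | step k hk h ih =>
      rename_i g fmid
      have e : T.node (T.expandAt g k) r = T.expandAt (T.node g r) k := by
        simp [T.expandAt, if_pos hk]
      rw [e]
      exact TExp.step _ (by simp [T.leaves]; omega) ih

theorem TExp.nodeRight {r' r : T} (l : T) (h : TExp r' r) :
    TExp (T.node l r') (T.node l r) := by
  induction h with
  | refl => exact TExp.refl _
  | step k hk h ih =>
      rename_i g fmid
      have e : T.node l (T.expandAt g k) = T.expandAt (T.node l g) (l.leaves + k) := by
        simp [T.expandAt, if_neg (by omega : ¬ l.leaves + k < l.leaves),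
          Nat.add_sub_cancel_left]
      rw [e]
      exact TExp.step _ (by simp [T.leaves]; omega) ih

theorem TExp.node {l' l r' r : T} (hl : TExp l' l) (hr : TExp r' r) :
    TExp (T.node l' r') (T.node l r) :=
  (TExp.nodeRight l' hr).trans (TExp.nodeLeft r hl)

theorem TExp_leaf : ∀ t : T, TExp t T.leaf
  | .leaf => TExp.refl _
  | .node l r => by
      have h1 : TExp (T.node l r) caret := TExp.node (TExp_leaf l) (TExp_leaf r)
      have h2 : TExp caret T.leaf :=
        TExp.step (g := T.leaf) 0 (T.leaves_pos _) (TExp.refl _)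
      exact h1.trans h2

/-- Supremum of two trees. -/
def supT : T → T → T
  | .leaf, u => u
  | .node a b, .leaf => .node a b
  | .node a b, .node c d => .node (supT a c) (supT b d)

theorem supT_left : ∀ t u : T, TExp (supT t u) t
  | .leaf, u => TExp_leaf u
  | .node _ _, .leaf => TExp.refl _
  | .node a b, .node c d => TExp.node (supT_left a c) (supT_left b d)

theorem supT_right : ∀ t u : T, TExp (supT t u) u
  | .leaf, _ => TExp.refl _
  | .node a b, .leaf => TExp_leaf (T.node a b)
  | .node a b, .node c d => TExp.node (supT_right a c) (supT_right b d)

theorem sup_forest : ∀ (f f' : List T), f.length = f'.length →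
    Expands (List.zipWith supT f f') f ∧ Expands (List.zipWith supT f f') f'
  | [], [], _ => ⟨Expands.refl _, Expands.refl _⟩
  | [], _ :: _, h => by simp at h
  | _ :: _, [], h => by simp at h
  | a :: f, b :: f', h => by
      have ih := sup_forest f f' (by simpa using h)
      constructor
      · exact Expands_append (g₁ := [supT a b]) (f₁ := [a])
          (supT_left a b).toExpands ih.1
      · exact Expands_append (g₁ := [supT a b]) (f₁ := [b])
          (supT_right a b).toExpands ih.2

/-- Expanding the second coordinate of a forest pair yields an equivalent pair. -/
theorem pair_exp {f₁ f₂ h : List T} (hE : Expands h f₂) :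
    ∀ (hc : f₁ ≠ [] ∧ f₂ ≠ [] ∧ leavesList f₁ = leavesList f₂),
    ∃ (f₁' : List T) (hc' : f₁' ≠ [] ∧ h ≠ [] ∧ leavesList f₁' = leavesList h),
      f₁'.length = f₁.length ∧
      Fgpd.mk ⟨(f₁', h), hc'⟩ = Fgpd.mk ⟨(f₁, f₂), hc⟩ := by
  induction hE with
  | refl => exact fun hc => ⟨f₁, hc, rfl, rfl⟩
  | step k hk h ih =>
      intro hc
      obtain ⟨f₁', hc', hlen, heq⟩ := ih hc
      have hk1 : k < leavesList f₁' := by rw [hc'.2.2]; exact hk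
      refine ⟨expandListAt f₁' k,
        ⟨expandListAt_ne_nil hc'.1 k, expandListAt_ne_nil hc'.2.1 k, ?_⟩,
        ?_, ?_⟩
      · rw [leavesList_expandListAt _ _ hk1, leavesList_expandListAt _ _ hk,
          hc'.2.2]
      · rw [expandListAt_length, hlen]
      · refine Eq.trans ?_ heq
        exact (Quot.sound ⟨k, hk1, rfl⟩).symm


/-- The map `f : 𝓕₁ → ℕ`, `[t, f] ↦` number of roots of `f`, is `F`-invariant, and
`F` acts transitively on each of its level sets: if `x, x' ∈ 𝓕₁` satisfy
`f(x) = f(x')` then there is `g ∈ F` with `g ⬝ x = x'`. -/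
theorem F_transitive_on_level_sets :
    (∀ g x y : Fgpd, InF g → InF1 x → MulDef g x y → rootsF y = rootsF x) ∧
    (∀ x x' : Fgpd, InF1 x → InF1 x' → rootsF x = rootsF x' →
      ∃ g : Fgpd, InF g ∧ MulDef g x x') := by
  constructor
  · rintro g x y - - ⟨a, b, ha, hb, hab, hcond, hy⟩
    subst hy; subst hb
    rfl
  · rintro x x' ⟨t, f, hx, rfl⟩ ⟨t', f', hx', rfl⟩ hroots
    have hlen : f.length = f'.length := hroots
    obtain ⟨hEf, hEf'⟩ := sup_forest f f' hlen
    set hcom := List.zipWith supT f f' with hcomdef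
    obtain ⟨f₁, hc1, hlen1, heq1⟩ := pair_exp hEf hx
    obtain ⟨f₁', hc1', hlen1', heq1'⟩ := pair_exp hEf' hx'
    obtain ⟨t₁, rfl⟩ := List.length_eq_one_iff.mp (by simpa using hlen1)
    obtain ⟨t₁', rfl⟩ := List.length_eq_one_iff.mp (by simpa using hlen1')
    have hleq : leavesList [t₁'] = leavesList [t₁] := by
      rw [hc1.2.2, hc1'.2.2]
    refine ⟨Fgpd.mk ⟨([t₁'], [t₁]), ⟨List.cons_ne_nil _ _, List.cons_ne_nil _ _, hleq⟩⟩,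
      ⟨t₁', t₁, _, rfl⟩, ?_⟩
    refine ⟨⟨([t₁'], [t₁]), ⟨List.cons_ne_nil _ _, List.cons_ne_nil _ _, hleq⟩⟩,
      ⟨([t₁], hcom), hc1⟩, rfl, heq1, rfl,
      ⟨List.cons_ne_nil _ _, hc1'.2.1, hc1'.2.2⟩, ?_⟩
    exact heq1'
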